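/- arXiv:1607.02800 — 2 statements merged into one kernel-verified Lean document; each statement's English description precedes it below -/
import Mathlib

section
/- Let X be a nonnegative real random variable whose survival function is given by P(X > s) = (V₁ - V₀)/(V₁ - γ/c + (γ/c)·e^{cs}) for s ≥ 0 and P(X > s) = 1 for s < 0, where c > 0 and γ/c < V₀ < V₁. Then X is integrable and E[X] = (1/c) · ((V₁ - V₀)/(V₁ - γ/c)) · ln(V₁ / (γ/c)). -/
/-!
By the tail formula, `E[X] = ∫₀^∞ P(X > s) ds`, and the tail `(b + a e^{cs})⁻¹` with
`a = γ/c`, `b = V₁ - γ/c` has the explicit antiderivative `-log(b e^{-cs} + a) / (bc)`,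
which tends to `-log a / (bc)` at infinity. The case `γ = 0` is impossible: the tail would be a
positive constant, while `P(X > s) → 0`.
-/

open MeasureTheory Filter Set Real Topology
open scoped ENNReal
section Survival

variable {Ω : Type*} [MeasurableSpace Ω] {μ : Measure Ω} {X : Ω → ℝ}

theorem tendsto_measure_setOf_lt_atTop (hX : AEMeasurable X μ) {s₀ : ℝ}
    (hs₀ : μ {ω | s₀ < X ω} ≠ ∞) :
    Tendsto (fun s : ℝ => μ {ω | s < X ω}) atTop (𝓝 0) := by
  have hanti : Antitone fun s : ℝ => {ω | s < X ω} :=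
    fun s t hst ω hω => hst.trans_lt hω
  have hempty : ⋂ s : ℝ, {ω | s < X ω} = ∅ :=
    eq_empty_of_forall_notMem fun ω hω => lt_irrefl (X ω) (mem_iInter.1 hω (X ω))
  simpa [Function.comp_def, hempty] using tendsto_measure_iInter_atTop
    (fun s => nullMeasurableSet_lt aemeasurable_const hX) hanti ⟨s₀, hs₀⟩

theorem integrable_and_integral_eq_of_meas_lt_eq_ofReal (hX : AEMeasurable X μ)
    (hX₀ : 0 ≤ᵐ[μ] X) {f : ℝ → ℝ} (hf : IntegrableOn f (Ioi 0))
    (hf₀ : ∀ t ∈ Ioi (0 : ℝ), 0 ≤ f t)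
    (hsurv : ∀ t ∈ Ioi (0 : ℝ), μ {ω | t < X ω} = ENNReal.ofReal (f t)) :
    Integrable X μ ∧ ∫ ω, X ω ∂μ = ∫ t in Ioi 0, f t := by
  have hlint : ∫⁻ ω, ENNReal.ofReal (X ω) ∂μ = ENNReal.ofReal (∫ t in Ioi 0, f t) := by
    rw [lintegral_eq_lintegral_meas_lt μ hX₀ hX, setLIntegral_congr_fun measurableSet_Ioi hsurv,
      ofReal_integral_eq_lintegral_ofReal hf (ae_restrict_of_forall_mem measurableSet_Ioi hf₀)]
  refine ⟨⟨hX.aestronglyMeasurable, ?_⟩, ?_⟩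
  · rw [hasFiniteIntegral_iff_ofReal hX₀, hlint]
    exact ENNReal.ofReal_lt_top
  · rw [integral_eq_lintegral_of_nonneg_ae hX₀ hX.aestronglyMeasurable, hlint,
      ENNReal.toReal_ofReal (setIntegral_nonneg measurableSet_Ioi hf₀)]

end Survival

section LogisticTail

variable {a b c : ℝ}

theorem hasDerivAt_neg_log_mul_exp_neg_add_div (ha : 0 < a) (hb : 0 < b) (hc : 0 < c) (s : ℝ) :
    HasDerivAt (fun s => -Real.log (b * exp (-(c * s)) + a) / (b * c))
      (b + a * exp (c * s))⁻¹ s := by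
  have hinner : HasDerivAt (fun s => b * exp (-(c * s)) + a) (b * (exp (-(c * s)) * -c)) s :=
    ((((hasDerivAt_id s).const_mul c).neg.exp).const_mul b).add_const a |>.congr_deriv (by simp)
  refine ((hinner.log (by positivity)).neg.div_const (b * c)).congr_deriv ?_
  rw [exp_neg]
  field_simp

theorem tendsto_neg_log_mul_exp_neg_add_div (ha : 0 < a) (hc : 0 < c) :
    Tendsto (fun s => -Real.log (b * exp (-(c * s)) + a) / (b * c)) atTop
      (𝓝 (-Real.log a / (b * c))) := by
  have hexp : Tendsto (fun s => b * exp (-(c * s)) + a) atTop (𝓝 a) := by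
    simpa using ((tendsto_exp_atBot.comp (tendsto_neg_atTop_atBot.comp
      (tendsto_id.const_mul_atTop hc))).const_mul b).add_const a
  exact ((continuousAt_log ha.ne').tendsto.comp hexp).neg.div_const _

theorem integrableOn_inv_add_mul_exp (ha : 0 < a) (hb : 0 < b) (hc : 0 < c) :
    IntegrableOn (fun s => (b + a * exp (c * s))⁻¹) (Ioi 0) :=
  integrableOn_Ioi_deriv_of_nonneg' (fun s _ => hasDerivAt_neg_log_mul_exp_neg_add_div ha hb hc s)
    (fun s _ => by positivity) (tendsto_neg_log_mul_exp_neg_add_div ha hc)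

theorem integral_inv_add_mul_exp (ha : 0 < a) (hb : 0 < b) (hc : 0 < c) :
    ∫ s in Ioi 0, (b + a * exp (c * s))⁻¹ = Real.log ((a + b) / a) / (b * c) := by
  rw [integral_Ioi_of_hasDerivAt_of_nonneg'
    (fun s _ => hasDerivAt_neg_log_mul_exp_neg_add_div ha hb hc s)
    (fun s _ => by positivity) (tendsto_neg_log_mul_exp_neg_add_div ha hc),
    log_div (by positivity) ha.ne']
  simp only [mul_zero, neg_zero, exp_zero, mul_one]
  ring_nf

end LogisticTail

theorem stmt_4_general {Ω : Type*} [MeasurableSpace Ω] (P : Measure Ω)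
    (X : Ω → ℝ) (hXmeas : Measurable X) (hXnonneg : ∀ ω, 0 ≤ X ω)
    (c γ V₀ V₁ : ℝ) (hc : 0 < c) (hγ : 0 ≤ γ)
    (hV₀ : γ / c < V₀) (hV₁ : V₀ < V₁)
    (hsurv : ∀ s : ℝ, 0 ≤ s →
      P {ω | s < X ω} = ENNReal.ofReal ((V₁ - V₀) / (V₁ - γ / c + (γ / c) * exp (c * s)))) :
    Integrable X P ∧
      ∫ ω, X ω ∂P = (1 / c) * ((V₁ - V₀) / (V₁ - γ / c)) * Real.log (V₁ / (γ / c)) := by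
  set a := γ / c
  set b := V₁ - a with hb_def
  have hb : 0 < b := by linarith
  have hV : 0 < V₁ - V₀ := by linarith
  have ha : 0 < a := by
    refine (show 0 ≤ a from div_nonneg hγ hc.le).lt_of_ne' fun ha => ?_
    have htail := tendsto_measure_setOf_lt_atTop hXmeas.aemeasurable
      (ne_of_eq_of_ne (hsurv 0 le_rfl) ENNReal.ofReal_ne_top)
    have hconst : (fun _ : ℝ => ENNReal.ofReal ((V₁ - V₀) / b)) =ᶠ[atTop]
        fun s => P {ω | s < X ω} :=
      (eventually_ge_atTop 0).mono fun s hs => by simp only [hsurv s hs, ha, zero_mul, add_zero]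
    have := tendsto_nhds_unique (tendsto_const_nhds.congr' hconst) htail
    exact (ENNReal.ofReal_pos.2 (div_pos hV hb)).ne' this
  obtain ⟨hint, hval⟩ := integrable_and_integral_eq_of_meas_lt_eq_ofReal hXmeas.aemeasurable
    (ae_of_all _ hXnonneg) ((integrableOn_inv_add_mul_exp ha hb hc).const_mul (V₁ - V₀))
    (fun t _ => by positivity) fun t ht => by rw [hsurv t (le_of_lt ht), div_eq_mul_inv]
  refine ⟨hint, ?_⟩
  rw [hval, integral_const_mul, integral_inv_add_mul_exp ha hb hc, hb_def, add_sub_cancel]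
  field_simp

/-- the up-cross-time controlling distribution has finite mean
`(1/c)·((V₁-V₀)/(V₁-γ/c))·ln(V₁/(γ/c))`. -/
theorem stmt_4 {Ω : Type*} [MeasurableSpace Ω] (P : Measure Ω) [IsProbabilityMeasure P]
    (X : Ω → ℝ) (hXmeas : Measurable X) (hXnonneg : ∀ ω, 0 ≤ X ω)
    (c γ V₀ V₁ : ℝ) (hc : 0 < c) (hγ : 0 ≤ γ)
    (hV₀ : γ / c < V₀) (hV₁ : V₀ < V₁)
    (hsurv : ∀ s : ℝ, 0 ≤ s →
      P {ω | s < X ω} = ENNReal.ofReal ((V₁ - V₀) / (V₁ - γ / c + (γ / c) * exp (c * s))))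
    (hsurv' : ∀ s : ℝ, s < 0 → P {ω | s < X ω} = 1) :
    Integrable X P ∧
      ∫ ω, X ω ∂P = (1 / c) * ((V₁ - V₀) / (V₁ - γ / c)) * Real.log (V₁ / (γ / c)) :=
  stmt_4_general P X hXmeas hXnonneg c γ V₀ V₁ hc hγ hV₀ hV₁ hsurv
end

section
/- For fixed constants c > 0 and V₁ > a > 0 with V₁/a > 1, consider the function φ(β) = (1 - ln β)/((1 - β)·L) on β ∈ (0,1), where L = ln(V₁/a) > 0. Then φ attains its minimum at β* = -1/W₋₁(-e^{-2}), where W₋₁ is the lower branch of the Lambert W function, and the minimum value is φ(β*) = -W₋₁(-e^{-2})/L. -/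
/-!
With `s = -W₋₁(-e⁻²)` the defining equation of `W₋₁` reads `log s = s - 2`. The tangent line of
`log` at `1/s` gives `log β ≤ s β - 1 - log s = s β + 1 - s`, i.e. `s (1 - β) ≤ 1 - log β`,
with equality at `β = 1/s`. Dividing by `(1 - β) L > 0` shows that `φ ≥ s / L` on `(0,1)`,
with equality at `β* = 1/s`.
-/

open Real Set

theorem lt_neg_one_of_mul_exp_eq_neg_exp_neg_two {w : ℝ} (hw : w * exp w = -exp (-2))
    (hw' : w ≤ -1) : w < -1 := by
  refine hw'.lt_of_ne fun h => ?_
  rw [h, neg_one_mul, neg_inj, exp_eq_exp] at hw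
  norm_num at hw

theorem log_neg_of_mul_exp_eq_neg_exp_neg_two {w : ℝ} (hw : w * exp w = -exp (-2))
    (hw0 : w < 0) : log (-w) = -w - 2 := by
  have h : log (-w * exp w) = log (exp (-2)) := by rw [neg_mul, hw, neg_neg]
  rw [log_mul (by linarith) (exp_ne_zero w), log_exp, log_exp] at h
  linarith

theorem mul_one_sub_le_one_sub_log {s β : ℝ} (hs : 0 < s) (hslog : log s = s - 2)
    (hβ : 0 < β) : s * (1 - β) ≤ 1 - log β := by
  have htangent := log_le_sub_one_of_pos (mul_pos hs hβ)
  rw [log_mul hs.ne' hβ.ne', hslog] at htangent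
  linarith

theorem one_sub_log_inv_eq {s : ℝ} (hs : s ≠ 0) (hslog : log s = s - 2) :
    1 - log s⁻¹ = s * (1 - s⁻¹) := by
  rw [log_inv, hslog, mul_sub, mul_inv_cancel₀ hs]
  ring

theorem stmt_6_general
    (L : ℝ) (hLpos : 0 < L)
    (w : ℝ) (hw : w * Real.exp w = -Real.exp (-2)) (hw' : w ≤ -1)
    (φ : ℝ → ℝ) (hφ : ∀ β, φ β = (1 - Real.log β) / ((1 - β) * L)) :
    (-1 / w) ∈ Set.Ioo (0:ℝ) 1 ∧
      (∀ β ∈ Set.Ioo (0:ℝ) 1, φ (-1 / w) ≤ φ β) ∧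
      φ (-1 / w) = -w / L := by
  have hw1 := lt_neg_one_of_mul_exp_eq_neg_exp_neg_two hw hw'
  have hslog := log_neg_of_mul_exp_eq_neg_exp_neg_two hw (by linarith)
  have hs : 0 < -w := by linarith
  have hβstar : -1 / w = (-w)⁻¹ := by rw [neg_div, ← div_neg, one_div]
  have hval : φ (-1 / w) = -w / L := by
    have h1 : 1 - (-w)⁻¹ ≠ 0 := (sub_pos.2 (inv_lt_one_of_one_lt₀ (by linarith))).ne'
    rw [hφ, hβstar, one_sub_log_inv_eq hs.ne' hslog, mul_comm (-w)]
    exact mul_div_mul_left _ _ h1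
  refine ⟨?_, fun β ⟨hβ0, hβ1⟩ => ?_, hval⟩
  · rw [hβstar]
    exact ⟨inv_pos.2 hs, inv_lt_one_of_one_lt₀ (by linarith)⟩
  · have hden : 0 < 1 - β := sub_pos.2 hβ1
    rw [hval, hφ, ← mul_div_mul_left (-w) L hden.ne', mul_comm (1 - β)]
    exact div_le_div_of_nonneg_right (mul_one_sub_le_one_sub_log hs hslog hβ0)
      (mul_pos hden hLpos).le

/-- the function `φ(β) = (1 - ln β)/((1-β)·L)` on `(0,1)` attains its
minimum at `β* = -1/W₋₁(-e⁻²)`, with minimum value `-W₋₁(-e⁻²)/L`.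
Here `w = W₋₁(-e⁻²)` is characterized by `w·e^w = -e⁻²` and `w ≤ -1`. -/
theorem stmt_6 (c V₁ a : ℝ) (hc : 0 < c) (ha : 0 < a) (hV : a < V₁)
    (L : ℝ) (hL : L = Real.log (V₁ / a)) (hLpos : 0 < L)
    (w : ℝ) (hw : w * Real.exp w = -Real.exp (-2)) (hw' : w ≤ -1)
    (φ : ℝ → ℝ) (hφ : ∀ β, φ β = (1 - Real.log β) / ((1 - β) * L)) :
    (-1 / w) ∈ Set.Ioo (0:ℝ) 1 ∧
      (∀ β ∈ Set.Ioo (0:ℝ) 1, φ (-1 / w) ≤ φ β) ∧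
      φ (-1 / w) = -w / L :=
  stmt_6_general L hLpos w hw hw' φ hφ
end
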